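/- Let Π₀ be a 2×2 real positive definite matrix, W > 0, P ≥ 0, and z₀, …, z_{T−1} ∈ ℝ² with T ≥ 1, and define recursively Π_{t+1} := Φ(Π_t, z_t) = Π_t − (Π_t z_t z_tᵀ Π_t)/(W + z_tᵀ Π_t z_t). If the average excitation satisfies (1/T)·Σ_{t=0}^{T−1} z_tᵀ Π_t z_t ≤ P, then the accumulated information utility is bounded by T times the channel capacity: (1/2)·log det(Π₀) − (1/2)·log det(Π_T) ≤ T·(1/2)·log(1 + P/W); equivalently det(Π_T) ≥ det(Π₀)·(1 + P/W)^{−T}. -/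

import Mathlib

open Matrix

/-- The LSE covariance update map Φ(Π, z) = Π − (Π z zᵀ Π)/(W + zᵀ Π z). -/
noncomputable def covUpdate (W : ℝ) (Pm : Matrix (Fin 2) (Fin 2) ℝ) (z : Fin 2 → ℝ) :
    Matrix (Fin 2) (Fin 2) ℝ :=
  Pm - (W + z ⬝ᵥ Pm.mulVec z)⁻¹ • (Pm * vecMulVec z z * Pm)

/-!
Each update multiplies the determinant by `W / (W + sₜ)`, where `sₜ = zₜᵀ Πₜ zₜ ≥ 0`, so the
information utility telescopes to `(1/2) ∑ₜ log (1 + sₜ / W)`. By concavity of `log` (Jensen) this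
sum is at most `T · log (1 + (∑ₜ sₜ / T) / W) ≤ T · log (1 + P / W)`. Positivity of the `Πₜ`, needed
for `sₜ ≥ 0` and `det Πₜ > 0`, propagates because the update is the Sherman–Morrison form of
`(Π⁻¹ + W⁻¹ z zᵀ)⁻¹`.
-/

open Finset

namespace Matrix

theorem vecMulVec_mul_mul_vecMulVec {l m n o R : Type*} [Fintype m] [Fintype n]
    [CommSemiring R] (a : l → R) (b : m → R) (A : Matrix m n R) (c : n → R) (d : o → R) :
    vecMulVec a b * A * vecMulVec c d = (b ⬝ᵥ A *ᵥ c) • vecMulVec a d := by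
  rw [vecMulVec_mul, vecMulVec_mul_vecMulVec, ← dotProduct_mulVec, vecMulVec_smul]

variable {n : Type*} [Fintype n]

theorem PosSemidef.dotProduct_mulVec_self_nonneg {A : Matrix n n ℝ} (hA : A.PosSemidef)
    (z : n → ℝ) : 0 ≤ z ⬝ᵥ A *ᵥ z := by
  simpa only [star_trivial] using hA.dotProduct_mulVec_nonneg z

variable [DecidableEq n]

theorem det_sub_smul_mul_vecMulVec_mul {R : Type*} [CommRing R] (A : Matrix n n R) (c : R)
    (z : n → R) :
    (A - c • (A * vecMulVec z z * A)).det = A.det * (1 - c * (z ⬝ᵥ A *ᵥ z)) := by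
  have h : A - c • (A * vecMulVec z z * A) = A * (1 + vecMulVec (-c • z) (z ᵥ* A)) := by
    rw [Matrix.mul_add, Matrix.mul_one, Matrix.mul_assoc, vecMulVec_mul, smul_vecMulVec,
      Matrix.mul_smul, neg_smul, ← sub_eq_add_neg]
  rw [h, det_mul, vecMulVec_eq Unit, det_one_add_replicateCol_mul_replicateRow, dotProduct_smul,
    ← dotProduct_mulVec, smul_eq_mul, neg_mul, ← sub_eq_add_neg]

theorem sub_smul_mul_vecMulVec_mul_eq_inv {K : Type*} [Field K] {A : Matrix n n K}
    (hA : IsUnit A) {W : K} (hW : W ≠ 0) (z : n → K) (hWs : W + z ⬝ᵥ A *ᵥ z ≠ 0) :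
    A - (W + z ⬝ᵥ A *ᵥ z)⁻¹ • (A * vecMulVec z z * A) = (A⁻¹ + W⁻¹ • vecMulVec z z)⁻¹ := by
  set s := z ⬝ᵥ A *ᵥ z
  refine (inv_eq_left_inv ?_).symm
  have hAA : A * A⁻¹ = 1 := mul_nonsing_inv A ((isUnit_iff_isUnit_det A).mp hA)
  have hcoef : W⁻¹ - (W + s)⁻¹ - (W + s)⁻¹ * W⁻¹ * s = 0 := by field_simp; ring
  calc (A - (W + s)⁻¹ • (A * vecMulVec z z * A)) * (A⁻¹ + W⁻¹ • vecMulVec z z)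
      = A * A⁻¹ + W⁻¹ • (A * vecMulVec z z) - (W + s)⁻¹ • (A * vecMulVec z z * (A * A⁻¹))
          - ((W + s)⁻¹ * W⁻¹) • (A * (vecMulVec z z * A * vecMulVec z z)) := by
        simp only [Matrix.mul_add, Matrix.sub_mul, Matrix.smul_mul, Matrix.mul_smul,
          Matrix.mul_assoc]
        module
    _ = 1 + (W⁻¹ - (W + s)⁻¹ - (W + s)⁻¹ * W⁻¹ * s) • (A * vecMulVec z z) := by
        rw [hAA, vecMulVec_mul_mul_vecMulVec, Matrix.mul_one, Matrix.mul_smul]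
        module
    _ = 1 := by rw [hcoef, zero_smul, add_zero]

theorem PosDef.sub_smul_mul_vecMulVec_mul {A : Matrix n n ℝ} (hA : A.PosDef) {W : ℝ}
    (hW : 0 < W) (z : n → ℝ) :
    (A - (W + z ⬝ᵥ A *ᵥ z)⁻¹ • (A * vecMulVec z z * A)).PosDef := by
  have hWs : 0 < W + z ⬝ᵥ A *ᵥ z := by linarith [hA.posSemidef.dotProduct_mulVec_self_nonneg z]
  rw [sub_smul_mul_vecMulVec_mul_eq_inv hA.isUnit hW.ne' z hWs.ne']
  refine (hA.inv.add_posSemidef ?_).inv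
  simpa using (posSemidef_vecMulVec_self_star z).smul (inv_nonneg.mpr hW.le)

end Matrix

theorem covUpdate_posDef {W : ℝ} (hW : 0 < W) {A : Matrix (Fin 2) (Fin 2) ℝ} (hA : A.PosDef)
    (z : Fin 2 → ℝ) : (covUpdate W A z).PosDef :=
  hA.sub_smul_mul_vecMulVec_mul hW z

theorem log_det_sub_log_det_covUpdate {W : ℝ} (hW : 0 < W) {A : Matrix (Fin 2) (Fin 2) ℝ}
    (hA : A.PosDef) (z : Fin 2 → ℝ) :
    Real.log A.det - Real.log (covUpdate W A z).det = Real.log (1 + z ⬝ᵥ A *ᵥ z / W) := by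
  have hs := hA.posSemidef.dotProduct_mulVec_self_nonneg z
  have hdet : (covUpdate W A z).det = A.det / (1 + z ⬝ᵥ A *ᵥ z / W) := by
    rw [covUpdate, det_sub_smul_mul_vecMulVec_mul]
    field_simp
    ring
  rw [hdet, Real.log_div hA.det_pos.ne' (by positivity), sub_sub_cancel]

theorem Real.sum_log_one_add_le {ι : Type*} (s : Finset ι) {x : ι → ℝ}
    (hx : ∀ i ∈ s, 0 ≤ x i) :
    ∑ i ∈ s, Real.log (1 + x i) ≤ #s * Real.log (1 + (∑ i ∈ s, x i) / #s) := by
  rcases s.eq_empty_or_nonempty with rfl | hs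
  · simp
  have hcard : (0 : ℝ) < #s := by exact_mod_cast hs.card_pos
  have jensen := strictConcaveOn_log_Ioi.concaveOn.le_map_sum (t := s)
    (w := fun _ ↦ (#s : ℝ)⁻¹) (p := fun i ↦ 1 + x i) (fun _ _ ↦ by positivity)
    (by simp [hcard.ne']) (fun i hi ↦ Set.mem_Ioi.mpr (by linarith [hx i hi]))
  have hmean : ∑ i ∈ s, (#s : ℝ)⁻¹ • (1 + x i) = 1 + (∑ i ∈ s, x i) / #s := by
    simp only [smul_eq_mul, mul_add, sum_add_distrib, ← mul_sum, sum_const, nsmul_eq_mul]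
    field_simp
  rwa [hmean, ← smul_sum, smul_eq_mul, inv_mul_le_iff₀ hcard] at jensen

theorem covUpdate_capacity_bound_general
    (Pm0 : Matrix (Fin 2) (Fin 2) ℝ) (hPm0 : Pm0.PosDef)
    (W : ℝ) (hW : 0 < W) (P : ℝ)
    (T : ℕ) (z : ℕ → Fin 2 → ℝ)
    (Pi : ℕ → Matrix (Fin 2) (Fin 2) ℝ)
    (hPi0 : Pi 0 = Pm0)
    (hrec : ∀ t, Pi (t + 1) = covUpdate W (Pi t) (z t))
    (hAvg : (1 / (T : ℝ)) * ∑ t ∈ Finset.range T, z t ⬝ᵥ (Pi t).mulVec (z t) ≤ P) :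
    (1 / 2) * Real.log Pm0.det - (1 / 2) * Real.log (Pi T).det
        ≤ (T : ℝ) * ((1 / 2) * Real.log (1 + P / W)) ∧
      (Pi T).det ≥ Pm0.det * (1 + P / W) ^ (-(T : ℤ)) := by
  set s : ℕ → ℝ := fun t ↦ z t ⬝ᵥ (Pi t) *ᵥ z t / W
  have hpos : ∀ t, (Pi t).PosDef := fun t ↦ by
    induction t with
    | zero => rwa [hPi0]
    | succ t ih => rw [hrec]; exact covUpdate_posDef hW ih (z t)
  have hs : ∀ t ∈ range T, 0 ≤ s t := fun t _ ↦
    div_nonneg ((hpos t).posSemidef.dotProduct_mulVec_self_nonneg (z t)) hW.le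
  have hutility : Real.log Pm0.det - Real.log (Pi T).det = ∑ t ∈ range T, Real.log (1 + s t) := by
    rw [← hPi0, ← sum_range_sub' (fun t ↦ Real.log (Pi t).det)]
    exact sum_congr rfl fun t _ ↦ hrec t ▸ log_det_sub_log_det_covUpdate hW (hpos t) (z t)
  have hmean_nonneg : 0 ≤ (∑ t ∈ range T, s t) / T := div_nonneg (sum_nonneg hs) T.cast_nonneg
  have hmean : (∑ t ∈ range T, s t) / T ≤ P / W :=
    calc (∑ t ∈ range T, s t) / T
        = (1 / (T : ℝ)) * (∑ t ∈ range T, z t ⬝ᵥ (Pi t) *ᵥ z t) / W := by rw [← sum_div]; ring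
      _ ≤ P / W := by gcongr
  have hcap : ∑ t ∈ range T, Real.log (1 + s t) ≤ T * Real.log (1 + P / W) := by
    refine (Real.sum_log_one_add_le _ hs).trans ?_
    rw [card_range]
    gcongr
  have hq : 0 < 1 + P / W := by linarith
  refine ⟨by linarith, ?_⟩
  rw [ge_iff_le, ← Real.log_le_log_iff (mul_pos hPm0.det_pos (zpow_pos hq _)) (hpos T).det_pos,
    Real.log_mul hPm0.det_pos.ne' (zpow_pos hq _).ne', Real.log_zpow]
  push_cast
  linarith

/-- If the average excitation power is at most P, the accumulated information
utility is at most T·C(P): (1/2)log det Π₀ − (1/2)log det Π_T ≤ T·(1/2)·log(1 + P/W);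
equivalently det Π_T ≥ det Π₀ · (1 + P/W)^{-T}. -/
theorem covUpdate_capacity_bound
    (Pm0 : Matrix (Fin 2) (Fin 2) ℝ) (hPm0 : Pm0.PosDef)
    (W : ℝ) (hW : 0 < W) (P : ℝ) (hP : 0 ≤ P)
    (T : ℕ) (hT : 1 ≤ T) (z : ℕ → Fin 2 → ℝ)
    (Pi : ℕ → Matrix (Fin 2) (Fin 2) ℝ)
    (hPi0 : Pi 0 = Pm0)
    (hrec : ∀ t, Pi (t + 1) = covUpdate W (Pi t) (z t))
    (hAvg : (1 / (T : ℝ)) * ∑ t ∈ Finset.range T, z t ⬝ᵥ (Pi t).mulVec (z t) ≤ P) :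
    (1 / 2) * Real.log Pm0.det - (1 / 2) * Real.log (Pi T).det
        ≤ (T : ℝ) * ((1 / 2) * Real.log (1 + P / W)) ∧
      (Pi T).det ≥ Pm0.det * (1 + P / W) ^ (-(T : ℤ)) :=
  covUpdate_capacity_bound_general Pm0 hPm0 W hW P T z Pi hPi0 hrec hAvg
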